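/- arXiv:1004.3854 — 3 statements merged into one kernel-verified Lean document; each statement's English description precedes it below -/
import Mathlib

section
/- Let V be a twice differentiable function on ℝ² ∖ {0} that is homogeneous of degree −2, i.e., V(t q₁, t q₂) = t⁻² V(q₁,q₂) for all t > 0. Then F₁ := (1/2)(q₁p₂ − q₂p₁)² + (q₁² + q₂²)V(q₁,q₂) is a first integral of the Hamiltonian H := (1/2)(p₁² + p₂²) + V(q₁,q₂), i.e., the Poisson bracket {H, F₁} vanishes identically on (ℝ² ∖ {0}) × ℝ². -/
/-!
Write `L = q₁p₂ - q₂p₁`, `r² = q₁² + q₂²` and `V₁, V₂` for the partial derivatives of `V`.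
Expanding the bracket, the terms `L (q₁V₂ - q₂V₁)` and `-r² (p₁V₁ + p₂V₂)` combine into
`(q·p)(q·∇V)`, so that `{H, F₁} = -(q·p)(q·∇V + 2V)`. Differentiating the homogeneity relation
`V(t q) = t⁻² V(q)` at `t = 1` gives Euler's relation `q·∇V = -2V`, which kills the bracket.
-/

/-- The canonical Poisson bracket of two functions of `(q₁, q₂, p₁, p₂)`. -/
noncomputable def poissonBracket (F G : ℝ → ℝ → ℝ → ℝ → ℝ)
    (q₁ q₂ p₁ p₂ : ℝ) : ℝ :=
  deriv (fun x => F x q₂ p₁ p₂) q₁ * deriv (fun x => G q₁ q₂ x p₂) p₁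
  - deriv (fun x => F q₁ q₂ x p₂) p₁ * deriv (fun x => G x q₂ p₁ p₂) q₁
  + deriv (fun x => F q₁ x p₁ p₂) q₂ * deriv (fun x => G q₁ q₂ p₁ x) p₂
  - deriv (fun x => F q₁ q₂ p₁ x) p₂ * deriv (fun x => G q₁ x p₁ p₂) q₂

open Filter Topology

section Euler

variable {E F : Type*} [NormedAddCommGroup E] [NormedSpace ℝ E]
  [NormedAddCommGroup F] [NormedSpace ℝ F]

theorem HasFDerivAt.apply_self_eq_of_eventually_smul {V : E → F} {V' : E →L[ℝ] F} {x : E}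
    {c : ℝ → ℝ} {c' : ℝ} (hV : HasFDerivAt V V' x) (hc : HasDerivAt c c' 1)
    (hhom : ∀ᶠ t in 𝓝 1, V (t • x) = c t • V x) : V' x = c' • V x := by
  have hray : HasDerivAt (fun t : ℝ => t • x) x 1 := by
    simpa using (hasDerivAt_id (1 : ℝ)).smul_const x
  have hV₁ : HasFDerivAt V V' ((1 : ℝ) • x) := by rwa [one_smul]
  exact (hV₁.comp_hasDerivAt 1 hray).unique
    ((hc.smul_const (V x)).congr_of_eventuallyEq hhom)

end Euler

section Partial

variable {F : Type*} [NormedAddCommGroup F] [NormedSpace ℝ F]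
  {V : ℝ × ℝ → F} {V' : ℝ × ℝ →L[ℝ] F} {a b : ℝ}

theorem HasFDerivAt.hasDerivAt_comp_mk_left (h : HasFDerivAt V V' (a, b)) :
    HasDerivAt (fun x => V (x, b)) (V' (1, 0)) a :=
  h.comp_hasDerivAt a ((hasDerivAt_id a).prodMk (hasDerivAt_const a b))

theorem HasFDerivAt.hasDerivAt_comp_mk_right (h : HasFDerivAt V V' (a, b)) :
    HasDerivAt (fun y => V (a, y)) (V' (0, 1)) b :=
  h.comp_hasDerivAt b ((hasDerivAt_const b a).prodMk (hasDerivAt_id b))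

theorem ContinuousLinearMap.apply_mk_eq (V' : ℝ × ℝ →L[ℝ] F) (a b : ℝ) :
    V' (a, b) = a • V' (1, 0) + b • V' (0, 1) := by
  rw [← map_smul, ← map_smul, ← map_add]
  simp

end Partial

theorem poissonBracket_eq_of_hasDerivAt {F G : ℝ → ℝ → ℝ → ℝ → ℝ} {q₁ q₂ p₁ p₂ : ℝ}
    {Fq₁ Fq₂ Fp₁ Fp₂ Gq₁ Gq₂ Gp₁ Gp₂ : ℝ}
    (hFq₁ : HasDerivAt (fun x => F x q₂ p₁ p₂) Fq₁ q₁)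
    (hFq₂ : HasDerivAt (fun x => F q₁ x p₁ p₂) Fq₂ q₂)
    (hFp₁ : HasDerivAt (fun x => F q₁ q₂ x p₂) Fp₁ p₁)
    (hFp₂ : HasDerivAt (fun x => F q₁ q₂ p₁ x) Fp₂ p₂)
    (hGq₁ : HasDerivAt (fun x => G x q₂ p₁ p₂) Gq₁ q₁)
    (hGq₂ : HasDerivAt (fun x => G q₁ x p₁ p₂) Gq₂ q₂)
    (hGp₁ : HasDerivAt (fun x => G q₁ q₂ x p₂) Gp₁ p₁)
    (hGp₂ : HasDerivAt (fun x => G q₁ q₂ p₁ x) Gp₂ p₂) :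
    poissonBracket F G q₁ q₂ p₁ p₂ = Fq₁ * Gp₁ - Fp₁ * Gq₁ + Fq₂ * Gp₂ - Fp₂ * Gq₂ := by
  rw [poissonBracket, hFq₁.deriv, hFq₂.deriv, hFp₁.deriv, hFp₂.deriv,
    hGq₁.deriv, hGq₂.deriv, hGp₁.deriv, hGp₂.deriv]

theorem poissonBracket_hamiltonian_angularIntegral {V : ℝ × ℝ → ℝ} {q₁ q₂ p₁ p₂ V₁ V₂ : ℝ}
    (hV₁ : HasDerivAt (fun x => V (x, q₂)) V₁ q₁)
    (hV₂ : HasDerivAt (fun y => V (q₁, y)) V₂ q₂) :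
    poissonBracket (fun q₁ q₂ p₁ p₂ => (1 / 2) * (p₁ ^ 2 + p₂ ^ 2) + V (q₁, q₂))
      (fun q₁ q₂ p₁ p₂ => (1 / 2) * (q₁ * p₂ - q₂ * p₁) ^ 2 + (q₁ ^ 2 + q₂ ^ 2) * V (q₁, q₂))
      q₁ q₂ p₁ p₂ = -(q₁ * p₁ + q₂ * p₂) * (q₁ * V₁ + q₂ * V₂ + 2 * V (q₁, q₂)) := by
  rw [poissonBracket_eq_of_hasDerivAt (hV₁.const_add _) (hV₂.const_add _)
    ((((hasDerivAt_pow 2 p₁).add_const _).const_mul _).add_const _)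
    ((((hasDerivAt_pow 2 p₂).const_add _).const_mul _).add_const _)
    (((((hasDerivAt_mul_const p₂).sub_const _).fun_pow 2).const_mul _).add
      (((hasDerivAt_pow 2 q₁).add_const _).mul hV₁))
    (((((hasDerivAt_mul_const p₁).const_sub _).fun_pow 2).const_mul _).add
      (((hasDerivAt_pow 2 q₂).const_add _).mul hV₂))
    (((((hasDerivAt_const_mul q₂)).const_sub _).fun_pow 2 |>.const_mul _).add_const _)
    (((((hasDerivAt_const_mul q₁)).sub_const _).fun_pow 2 |>.const_mul _).add_const _)]
  ring

/-- For a twice differentiable potential `V` on `ℝ² ∖ {0}` which is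
homogeneous of degree `-2`, the function
`F₁ = (1/2)(q₁p₂ - q₂p₁)² + (q₁² + q₂²) V(q₁,q₂)` is a first integral of
`H = (1/2)(p₁² + p₂²) + V(q₁,q₂)`: the Poisson bracket `{H, F₁}` vanishes identically on
`(ℝ² ∖ {0}) × ℝ²`. -/
theorem homogeneous_deg_neg_two_first_integral
    (V : ℝ × ℝ → ℝ)
    (hV : ContDiffOn ℝ 2 V {q : ℝ × ℝ | q ≠ 0})
    (hhom : ∀ t : ℝ, 0 < t → ∀ q : ℝ × ℝ, q ≠ 0 →
      V (t * q.1, t * q.2) = t⁻¹ ^ 2 * V q)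
    (H F₁ : ℝ → ℝ → ℝ → ℝ → ℝ)
    (hH : H = fun q₁ q₂ p₁ p₂ => (1 / 2) * (p₁ ^ 2 + p₂ ^ 2) + V (q₁, q₂))
    (hF₁ : F₁ = fun q₁ q₂ p₁ p₂ =>
      (1 / 2) * (q₁ * p₂ - q₂ * p₁) ^ 2 + (q₁ ^ 2 + q₂ ^ 2) * V (q₁, q₂)) :
    ∀ q₁ q₂ p₁ p₂ : ℝ, (q₁, q₂) ≠ (0, 0) →
      poissonBracket H F₁ q₁ q₂ p₁ p₂ = 0 := by
  subst hH hF₁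
  intro q₁ q₂ p₁ p₂ hq
  have hq0 : ((q₁, q₂) : ℝ × ℝ) ≠ 0 := hq
  have hVd : HasFDerivAt V (fderiv ℝ V (q₁, q₂)) (q₁, q₂) :=
    ((hV.differentiableOn two_ne_zero).differentiableAt
      (isOpen_compl_singleton.mem_nhds hq0)).hasFDerivAt
  have hEuler : fderiv ℝ V (q₁, q₂) (q₁, q₂) = (-2 : ℝ) • V (q₁, q₂) := by
    have hc : HasDerivAt (fun t : ℝ => t⁻¹ ^ 2) (-2) 1 :=
      ((hasDerivAt_inv one_ne_zero).fun_pow 2).congr_deriv (by norm_num)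
    refine hVd.apply_self_eq_of_eventually_smul hc ?_
    filter_upwards [Ioi_mem_nhds one_pos] with t ht
    exact hhom t ht (q₁, q₂) hq0
  rw [ContinuousLinearMap.apply_mk_eq] at hEuler
  simp only [smul_eq_mul] at hEuler
  rw [poissonBracket_hamiltonian_angularIntegral hVd.hasDerivAt_comp_mk_left
    hVd.hasDerivAt_comp_mk_right]
  linear_combination (-(q₁ * p₁ + q₂ * p₂)) * hEuler
end

section
/- Let n be a positive integer and define a_{i,m} := (m+2−i)_i (n−m−i)_{i−1} / ( (1)_{i−1} (2)_{i−1} ), where (a)_j denotes the Pochhammer symbol. Then for all integers i with 1 ≤ i ≤ ⌊(n−2)/2⌋ and all integers m with i ≤ m ≤ n−i−2, the recurrence [i(n−1)+m+1] a_{i+1,m+1} − [i(n+1)+m+2] a_{i+1,m} = (n+1)(n−m−i−1) a_{i,m} − (n−1)(m−i+2) a_{i,m+1} holds. -/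
/-- The coefficients
`a_{i,m} = (m+2-i)_i (n-m-i)_{i-1} / ((1)_{i-1} (2)_{i-1})`, built from Pochhammer
symbols, satisfy the recurrence
`[i(n-1)+m+1] a_{i+1,m+1} - [i(n+1)+m+2] a_{i+1,m}
  = (n+1)(n-m-i-1) a_{i,m} - (n-1)(m-i+2) a_{i,m+1}`
for all `1 ≤ i ≤ ⌊(n-2)/2⌋` (equivalently `2i + 2 ≤ n`) and `i ≤ m ≤ n-i-2`. -/
theorem pochhammer_recurrence (n : ℕ) (hn : 0 < n)
    (a : ℕ → ℕ → ℚ)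
    (ha : a = fun (i m : ℕ) =>
      (ascPochhammer ℚ i).eval ((m : ℚ) + 2 - (i : ℚ))
        * (ascPochhammer ℚ (i - 1)).eval ((n : ℚ) - (m : ℚ) - (i : ℚ))
        / ((ascPochhammer ℚ (i - 1)).eval 1 * (ascPochhammer ℚ (i - 1)).eval 2)) :
    ∀ i m : ℕ, 1 ≤ i → 2 * i + 2 ≤ n → i ≤ m → m + i + 2 ≤ n →
      ((i : ℚ) * (n - 1) + m + 1) * a (i + 1) (m + 1)
        - ((i : ℚ) * (n + 1) + m + 2) * a (i + 1) m
      = ((n : ℚ) + 1) * ((n : ℚ) - m - i - 1) * a i m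
        - ((n : ℚ) - 1) * ((m : ℚ) - i + 2) * a i (m + 1) := by
  subst ha
  intro i m hi h2 him hmn
  obtain ⟨j, rfl⟩ : ∃ j, i = j + 1 := ⟨i - 1, (Nat.succ_pred_eq_of_pos hi).symm⟩
  simp only [Nat.add_sub_cancel]
  push_cast
  have evalL : ∀ (k : ℕ) (x : ℚ), (ascPochhammer ℚ (k+1)).eval x
      = x * (ascPochhammer ℚ k).eval (x+1) := by
    intro k x
    rw [ascPochhammer_succ_left]
    simp [Polynomial.eval_comp]
  have key : ∀ x : ℚ, x * (ascPochhammer ℚ j).eval (x+1)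
      = (ascPochhammer ℚ j).eval x * (x + j) :=
    fun x => (evalL j x).symm.trans (ascPochhammer_succ_eval j x)
  -- abbreviations
  have hmj : ((j : ℚ) + 1) ≤ (m : ℚ) := by exact_mod_cast Nat.cast_le.mpr him
  have hnm : ((m : ℚ) + (j : ℚ) + 3) ≤ (n : ℚ) := by exact_mod_cast Nat.cast_le.mpr hmn
  have hA : ((m : ℚ) + 2 - j) ≠ 0 := by linarith
  have hB : ((n : ℚ) - m - j - 2) ≠ 0 := by linarith
  have hd1 : (ascPochhammer ℚ j).eval (1 : ℚ) ≠ 0 := (ascPochhammer_pos j (1:ℚ) one_pos).ne'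
  have hd2 : (ascPochhammer ℚ j).eval (2 : ℚ) ≠ 0 := (ascPochhammer_pos j (2:ℚ) two_pos).ne'
  have hj1 : ((j : ℚ) + 1) ≠ 0 := by positivity
  have hj2 : ((j : ℚ) + 2) ≠ 0 := by positivity
  -- rewrite all evals in terms of level-j evals
  have e1 : (ascPochhammer ℚ (j + 1 + 1)).eval ((m:ℚ) + 1 + 2 - ((j:ℚ) + 1 + 1))
      = ((m:ℚ)+1-j) * (((m:ℚ)+2-j) * (ascPochhammer ℚ j).eval ((m:ℚ)+3-j)) := by
    rw [evalL, evalL, show (m:ℚ) + 1 + 2 - ((j:ℚ) + 1 + 1) = (m:ℚ)+1-j from by ring,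
      show (m:ℚ)+1-(j:ℚ)+1 = (m:ℚ)+2-j from by ring,
      show (m:ℚ)+2-(j:ℚ)+1 = (m:ℚ)+3-j from by ring]
  have e2 : (ascPochhammer ℚ (j + 1)).eval ((n:ℚ) - ((m:ℚ)+1) - ((j:ℚ) + 1 + 1))
      = ((n:ℚ)-m-j-3) * (ascPochhammer ℚ j).eval ((n:ℚ)-m-j-2) := by
    rw [evalL, show (n:ℚ) - ((m:ℚ)+1) - ((j:ℚ) + 1 + 1) = (n:ℚ)-m-j-3 from by ring,
      show (n:ℚ)-(m:ℚ)-(j:ℚ)-3+1 = (n:ℚ)-m-j-2 from by ring]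
  have e3 : (ascPochhammer ℚ (j + 1 + 1)).eval ((m:ℚ) + 2 - ((j:ℚ) + 1 + 1))
      = ((m:ℚ)-j) * (((m:ℚ)+1-j) * (ascPochhammer ℚ j).eval ((m:ℚ)+2-j)) := by
    rw [evalL, evalL, show (m:ℚ) + 2 - ((j:ℚ) + 1 + 1) = (m:ℚ)-j from by ring,
      show (m:ℚ)-(j:ℚ)+1 = (m:ℚ)+1-j from by ring,
      show (m:ℚ)+1-(j:ℚ)+1 = (m:ℚ)+2-j from by ring]
  have e4 : (ascPochhammer ℚ (j + 1)).eval ((n:ℚ) - (m:ℚ) - ((j:ℚ) + 1 + 1))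
      = ((n:ℚ)-m-j-2) * (ascPochhammer ℚ j).eval ((n:ℚ)-m-j-1) := by
    rw [evalL, show (n:ℚ) - (m:ℚ) - ((j:ℚ) + 1 + 1) = (n:ℚ)-m-j-2 from by ring,
      show (n:ℚ)-(m:ℚ)-(j:ℚ)-2+1 = (n:ℚ)-m-j-1 from by ring]
  have e5 : (ascPochhammer ℚ (j + 1)).eval ((m:ℚ) + 2 - ((j:ℚ) + 1))
      = ((m:ℚ)+1-j) * (ascPochhammer ℚ j).eval ((m:ℚ)+2-j) := by
    rw [evalL, show (m:ℚ) + 2 - ((j:ℚ) + 1) = (m:ℚ)+1-j from by ring,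
      show (m:ℚ)+1-(j:ℚ)+1 = (m:ℚ)+2-j from by ring]
  have e6 : (ascPochhammer ℚ j).eval ((n:ℚ) - (m:ℚ) - ((j:ℚ) + 1))
      = (ascPochhammer ℚ j).eval ((n:ℚ)-m-j-1) := by
    rw [show (n:ℚ) - (m:ℚ) - ((j:ℚ) + 1) = (n:ℚ)-m-j-1 from by ring]
  have e7 : (ascPochhammer ℚ (j + 1)).eval ((m:ℚ) + 1 + 2 - ((j:ℚ) + 1))
      = ((m:ℚ)+2-j) * (ascPochhammer ℚ j).eval ((m:ℚ)+3-j) := by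
    rw [evalL, show (m:ℚ) + 1 + 2 - ((j:ℚ) + 1) = (m:ℚ)+2-j from by ring,
      show (m:ℚ)+2-(j:ℚ)+1 = (m:ℚ)+3-j from by ring]
  have e8 : (ascPochhammer ℚ j).eval ((n:ℚ) - ((m:ℚ)+1) - ((j:ℚ) + 1))
      = (ascPochhammer ℚ j).eval ((n:ℚ)-m-j-2) := by
    rw [show (n:ℚ) - ((m:ℚ)+1) - ((j:ℚ) + 1) = (n:ℚ)-m-j-2 from by ring]
  have ed1 : (ascPochhammer ℚ (j + 1)).eval (1:ℚ)
      = (ascPochhammer ℚ j).eval (1:ℚ) * (1 + j) := ascPochhammer_succ_eval j 1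
  have ed2 : (ascPochhammer ℚ (j + 1)).eval (2:ℚ)
      = (ascPochhammer ℚ j).eval (2:ℚ) * (2 + j) := ascPochhammer_succ_eval j 2
  -- relations among level-j evals
  have hU2 : (ascPochhammer ℚ j).eval ((m:ℚ)+3-j)
      = (ascPochhammer ℚ j).eval ((m:ℚ)+2-j) * ((m:ℚ)+2) / ((m:ℚ)+2-j) := by
    have h := key ((m:ℚ)+2-j)
    rw [show (m:ℚ)+2-(j:ℚ)+1 = (m:ℚ)+3-j from by ring] at h
    field_simp
    linarith [h]
  have hV1 : (ascPochhammer ℚ j).eval ((n:ℚ)-m-j-1)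
      = (ascPochhammer ℚ j).eval ((n:ℚ)-m-j-2) * ((n:ℚ)-m-2) / ((n:ℚ)-m-j-2) := by
    have h := key ((n:ℚ)-m-j-2)
    rw [show (n:ℚ)-(m:ℚ)-(j:ℚ)-2+1 = (n:ℚ)-m-j-1 from by ring] at h
    field_simp
    linarith [h]
  rw [e1, e2, e3, e4, e5, e6, e7, e8, ed1, ed2, hU2, hV1]
  field_simp
  ring
end

section
/- Let k be a non-zero real number, U a twice differentiable function, and V a twice differentiable function on ℝ² ∖ {0} with V(r cos φ, r sin φ) = r^k U(φ) for all r > 0, φ ∈ ℝ. Suppose c > 0 and φ₀ ∈ ℝ are such that the point c⃗ = (c cos φ₀, c sin φ₀) is a Darboux point of V, i.e., ∇V(c⃗) = c⃗, and that U′(φ₀) = 0 and U(φ₀) ≠ 0. Then the eigenvalue λ := (∂²V/∂q₁² + ∂²V/∂q₂²)(c⃗) − (k−1) of the Hessian V″(c⃗) satisfies λ = 1 + U″(φ₀)/( k U(φ₀) ). -/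
/-!
Write `u = (cos φ₀, sin φ₀)`, `w = (-sin φ₀, cos φ₀)` and `H` for the Hessian of `V` at `c u`.
Differentiating `V (r u) = r ^ k U(φ₀)` once and twice in `r` at `r = c` gives
`c ∇V·u = k c^k U(φ₀)` and `c² H(u,u) = k (k-1) c^k U(φ₀)`; differentiating
`V (c u(φ)) = c^k U(φ)` twice in `φ` gives `c² H(w,w) - c ∇V·u = c^k U''(φ₀)`.
The Darboux condition `∇V = c u` turns `∇V·u` into `c`, so `k c^k U(φ₀) = c²`,
`H(u,u) = k - 1` and `H(w,w) = 1 + U''(φ₀) / (k U(φ₀))`, and `ΔV = H(u,u) + H(w,w)` is the trace of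
`H` in the orthonormal frame `(u, w)`.
-/

/-- Partial derivative with respect to the first Cartesian coordinate. -/
noncomputable def d1 (V : ℝ × ℝ → ℝ) (q : ℝ × ℝ) : ℝ :=
  deriv (fun s => V (s, q.2)) q.1

/-- Partial derivative with respect to the second Cartesian coordinate. -/
noncomputable def d2 (V : ℝ × ℝ → ℝ) (q : ℝ × ℝ) : ℝ :=
  deriv (fun s => V (q.1, s)) q.2

/-- Second partial derivative with respect to the first Cartesian coordinate. -/
noncomputable def d11 (V : ℝ × ℝ → ℝ) (q : ℝ × ℝ) : ℝ :=
  deriv (deriv (fun s => V (s, q.2))) q.1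

/-- Second partial derivative with respect to the second Cartesian coordinate. -/
noncomputable def d22 (V : ℝ × ℝ → ℝ) (q : ℝ × ℝ) : ℝ :=
  deriv (deriv (fun s => V (q.1, s))) q.2

open Filter Topology Real

theorem hasDerivAt_deriv_comp {E F : Type*} [NormedAddCommGroup E] [NormedSpace ℝ E]
    [NormedAddCommGroup F] [NormedSpace ℝ F] {f : E → F} {γ γ' : ℝ → E} {γ'' : E} {t : ℝ}
    (hf : ContDiffAt ℝ 2 f (γ t)) (hγ : ∀ᶠ s in 𝓝 t, HasDerivAt γ (γ' s) s)
    (hγ' : HasDerivAt γ' γ'' t) :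
    HasDerivAt (deriv (f ∘ γ))
      (fderiv ℝ (fderiv ℝ f) (γ t) (γ' t) (γ' t) + fderiv ℝ f (γ t) γ'') t := by
  have hγt : ContinuousAt γ t := hγ.self_of_nhds.continuousAt
  have hf_near : ∀ᶠ s in 𝓝 t, DifferentiableAt ℝ f (γ s) :=
    hγt.eventually ((hf.eventually (by simp)).mono fun _ h => h.differentiableAt two_ne_zero)
  have hderiv : deriv (f ∘ γ) =ᶠ[𝓝 t] fun s => fderiv ℝ f (γ s) (γ' s) := by
    filter_upwards [hγ, hf_near] with s hγs hfs
    exact (hfs.hasFDerivAt.comp_hasDerivAt s hγs).deriv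
  have hDf : HasFDerivAt (fderiv ℝ f) (fderiv ℝ (fderiv ℝ f) (γ t)) (γ t) :=
    ((hf.fderiv_right (m := 1) le_rfl).differentiableAt one_ne_zero).hasFDerivAt
  exact ((hDf.comp_hasDerivAt t hγ.self_of_nhds).clm_apply hγ').congr_of_eventuallyEq hderiv

theorem ContinuousLinearMap.apply_prod_eq {F : Type*} [NormedAddCommGroup F] [NormedSpace ℝ F]
    (L : ℝ × ℝ →L[ℝ] F) (v : ℝ × ℝ) : L v = v.1 • L (1, 0) + v.2 • L (0, 1) := by
  conv_lhs => rw [show v = v.1 • ((1 : ℝ), (0 : ℝ)) + v.2 • ((0 : ℝ), (1 : ℝ)) by ext <;> simp]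
  rw [map_add, map_smul, map_smul]

theorem ContinuousLinearMap.bilin_add_bilin_rotate (B : ℝ × ℝ →L[ℝ] ℝ × ℝ →L[ℝ] ℝ) {a b : ℝ}
    (hab : a ^ 2 + b ^ 2 = 1) :
    B (a, b) (a, b) + B (-b, a) (-b, a) = B (1, 0) (1, 0) + B (0, 1) (0, 1) := by
  simp only [B.apply_prod_eq (a, b), B.apply_prod_eq (-b, a), add_apply,
    smul_apply, (B _).apply_prod_eq (a, b), (B _).apply_prod_eq (-b, a),
    smul_eq_mul]
  linear_combination (B (1, 0) (1, 0) + B (0, 1) (0, 1)) * hab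

theorem polar_ne_zero {r : ℝ} (hr : r ≠ 0) (φ : ℝ) : (r * cos φ, r * sin φ) ≠ 0 := by
  intro h
  have h1 : r * cos φ = 0 := congrArg Prod.fst h
  have h2 : r * sin φ = 0 := congrArg Prod.snd h
  have hr2 : r ^ 2 = 0 := by
    linear_combination r * cos φ * h1 + r * sin φ * h2 - r ^ 2 * cos_sq_add_sin_sq φ
  exact hr (pow_eq_zero_iff two_ne_zero |>.mp hr2)

section Partials

variable {V : ℝ × ℝ → ℝ} {q : ℝ × ℝ}

theorem hasDerivAt_horizontal (s : ℝ) : HasDerivAt (fun t : ℝ => (t, q.2)) ((1 : ℝ), (0 : ℝ)) s :=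
  (hasDerivAt_id s).prodMk (hasDerivAt_const s q.2)

theorem hasDerivAt_vertical (s : ℝ) : HasDerivAt (fun t : ℝ => (q.1, t)) ((0 : ℝ), (1 : ℝ)) s :=
  (hasDerivAt_const s q.1).prodMk (hasDerivAt_id s)

theorem d1_eq_fderiv (hV : DifferentiableAt ℝ V q) : d1 V q = fderiv ℝ V q (1, 0) :=
  (hV.hasFDerivAt.comp_hasDerivAt q.1 (hasDerivAt_horizontal q.1)).deriv

theorem d2_eq_fderiv (hV : DifferentiableAt ℝ V q) : d2 V q = fderiv ℝ V q (0, 1) :=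
  (hV.hasFDerivAt.comp_hasDerivAt q.2 (hasDerivAt_vertical q.2)).deriv

theorem d11_eq_fderiv_fderiv (hV : ContDiffAt ℝ 2 V q) :
    d11 V q = fderiv ℝ (fderiv ℝ V) q (1, 0) (1, 0) := by
  simpa [d11, Function.comp_def] using (hasDerivAt_deriv_comp (γ := fun s => (s, q.2)) hV
    (Eventually.of_forall hasDerivAt_horizontal) (hasDerivAt_const q.1 _)).deriv

theorem d22_eq_fderiv_fderiv (hV : ContDiffAt ℝ 2 V q) :
    d22 V q = fderiv ℝ (fderiv ℝ V) q (0, 1) (0, 1) := by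
  simpa [d22, Function.comp_def] using (hasDerivAt_deriv_comp (γ := fun s => (q.1, s)) hV
    (Eventually.of_forall hasDerivAt_vertical) (hasDerivAt_const q.2 _)).deriv

theorem fderiv_apply_eq_of_d1_d2 (hV : DifferentiableAt ℝ V q) (h1 : d1 V q = q.1)
    (h2 : d2 V q = q.2) (v : ℝ × ℝ) : fderiv ℝ V q v = v.1 * q.1 + v.2 * q.2 := by
  rw [ContinuousLinearMap.apply_prod_eq, ← d1_eq_fderiv hV, ← d2_eq_fderiv hV, h1, h2,
    smul_eq_mul, smul_eq_mul]

end Partials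

section Polar

variable {k : ℝ} {U : ℝ → ℝ} {V : ℝ × ℝ → ℝ} {c φ : ℝ}

theorem hasDerivAt_radial (φ r : ℝ) :
    HasDerivAt (fun t => (t * cos φ, t * sin φ)) (cos φ, sin φ) r :=
  (hasDerivAt_mul_const _).prodMk (hasDerivAt_mul_const _)

theorem hasDerivAt_angular (c ψ : ℝ) :
    HasDerivAt (fun ψ => (c * cos ψ, c * sin ψ)) (-(c * sin ψ), c * cos ψ) ψ := by
  simpa using ((hasDerivAt_cos ψ).const_mul c).prodMk ((hasDerivAt_sin ψ).const_mul c)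

theorem deriv_radial_eventuallyEq
    (hpolar : ∀ r, 0 < r → V (r * cos φ, r * sin φ) = r ^ k * U φ) (hc : 0 < c) :
    deriv (fun t => V (t * cos φ, t * sin φ)) =ᶠ[𝓝 c] fun r => k * r ^ (k - 1) * U φ := by
  filter_upwards [eventually_gt_nhds hc] with r hr
  have hV : (fun t => V (t * cos φ, t * sin φ)) =ᶠ[𝓝 r] fun t => t ^ k * U φ := by
    filter_upwards [eventually_gt_nhds hr] with t ht
    exact hpolar t ht
  rw [hV.deriv_eq]
  exact ((hasDerivAt_rpow_const (Or.inl hr.ne')).mul_const _).deriv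

theorem fderiv_apply_radial (hV : DifferentiableAt ℝ V (c * cos φ, c * sin φ))
    (hpolar : ∀ r, 0 < r → V (r * cos φ, r * sin φ) = r ^ k * U φ) (hc : 0 < c) :
    c * fderiv ℝ V (c * cos φ, c * sin φ) (cos φ, sin φ) = k * c ^ k * U φ := by
  have hderiv := (hV.hasFDerivAt.comp_hasDerivAt c (hasDerivAt_radial φ c)).deriv
  rw [Function.comp_def, (deriv_radial_eventuallyEq hpolar hc).eq_of_nhds,
    rpow_sub_one hc.ne'] at hderiv
  rw [← hderiv]
  field_simp

theorem fderiv_fderiv_apply_radial (hV : ContDiffAt ℝ 2 V (c * cos φ, c * sin φ))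
    (hpolar : ∀ r, 0 < r → V (r * cos φ, r * sin φ) = r ^ k * U φ) (hc : 0 < c) :
    c ^ 2 * fderiv ℝ (fderiv ℝ V) (c * cos φ, c * sin φ) (cos φ, sin φ) (cos φ, sin φ)
      = k * (k - 1) * c ^ k * U φ := by
  have hderiv := (hasDerivAt_deriv_comp (γ := fun t => (t * cos φ, t * sin φ)) hV
    (Eventually.of_forall (hasDerivAt_radial φ)) (hasDerivAt_const c _)).deriv
  have hprofile : HasDerivAt (fun r => k * r ^ (k - 1) * U φ)
      (k * ((k - 1) * c ^ (k - 1 - 1)) * U φ) c :=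
    ((hasDerivAt_rpow_const (Or.inl hc.ne')).const_mul k).mul_const _
  rw [Function.comp_def, (deriv_radial_eventuallyEq hpolar hc).deriv_eq, hprofile.deriv,
    map_zero, add_zero, rpow_sub_one hc.ne', rpow_sub_one hc.ne'] at hderiv
  rw [← hderiv]
  field_simp

theorem fderiv_fderiv_apply_angular (hV : ContDiffAt ℝ 2 V (c * cos φ, c * sin φ))
    (hpolar : ∀ ψ, V (c * cos ψ, c * sin ψ) = c ^ k * U ψ) :
    c ^ 2 * fderiv ℝ (fderiv ℝ V) (c * cos φ, c * sin φ) (-sin φ, cos φ) (-sin φ, cos φ)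
      - c * fderiv ℝ V (c * cos φ, c * sin φ) (cos φ, sin φ) = c ^ k * deriv (deriv U) φ := by
  have hvelocity : HasDerivAt (fun ψ => (-(c * sin ψ), c * cos ψ))
      (-(c * cos φ), -(c * sin φ)) φ := by
    simpa using ((hasDerivAt_sin φ).const_mul c).neg.prodMk ((hasDerivAt_cos φ).const_mul c)
  have hderiv := (hasDerivAt_deriv_comp (γ := fun ψ => (c * cos ψ, c * sin ψ)) hV
    (Eventually.of_forall (hasDerivAt_angular c)) hvelocity).deriv
  have hcomp : V ∘ (fun ψ => (c * cos ψ, c * sin ψ)) = fun ψ => c ^ k * U ψ := funext hpolar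
  rw [hcomp, deriv_const_mul_field', deriv_const_mul_field] at hderiv
  have hw : ((-(c * sin φ), c * cos φ) : ℝ × ℝ) = c • (-sin φ, cos φ) := by ext <;> simp
  have hu : ((-(c * cos φ), -(c * sin φ)) : ℝ × ℝ) = (-c) • (cos φ, sin φ) := by ext <;> simp
  rw [hderiv, hw, hu]
  simp only [map_smul, smul_apply, smul_eq_mul]
  ring

end Polar

theorem darboux_point_lambda_general
    (k : ℝ) (hk : k ≠ 0) (U : ℝ → ℝ)
    (V : ℝ × ℝ → ℝ) (hV : ContDiffOn ℝ 2 V {q : ℝ × ℝ | q ≠ 0})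
    (hpolar : ∀ r : ℝ, 0 < r → ∀ φ : ℝ,
      V (r * Real.cos φ, r * Real.sin φ) = r ^ k * U φ)
    (c φ₀ : ℝ) (hc : 0 < c)
    (hdarboux1 : d1 V (c * Real.cos φ₀, c * Real.sin φ₀) = c * Real.cos φ₀)
    (hdarboux2 : d2 V (c * Real.cos φ₀, c * Real.sin φ₀) = c * Real.sin φ₀)
    (hU0 : U φ₀ ≠ 0) :
    d11 V (c * Real.cos φ₀, c * Real.sin φ₀)
      + d22 V (c * Real.cos φ₀, c * Real.sin φ₀) - (k - 1)
      = 1 + deriv (deriv U) φ₀ / (k * U φ₀) := by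
  have hVp : ContDiffAt ℝ 2 V (c * Real.cos φ₀, c * Real.sin φ₀) :=
    hV.contDiffAt (isOpen_ne.mem_nhds (polar_ne_zero hc.ne' φ₀))
  have hVd := hVp.differentiableAt two_ne_zero
  have hunit : fderiv ℝ V (c * cos φ₀, c * sin φ₀) (cos φ₀, sin φ₀) = c := by
    rw [fderiv_apply_eq_of_d1_d2 hVd hdarboux1 hdarboux2]
    linear_combination c * cos_sq_add_sin_sq φ₀
  have hrad1 := fderiv_apply_radial hVd (fun r hr => hpolar r hr φ₀) hc
  have hrad2 := fderiv_fderiv_apply_radial hVp (fun r hr => hpolar r hr φ₀) hc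
  have hang := fderiv_fderiv_apply_angular hVp (hpolar c hc)
  rw [hunit] at hrad1 hang
  rw [d11_eq_fderiv_fderiv hVp, d22_eq_fderiv_fderiv hVp,
    ← ContinuousLinearMap.bilin_add_bilin_rotate _ (cos_sq_add_sin_sq φ₀)]
  field_simp
  apply mul_left_cancel₀ (pow_ne_zero 2 hc.ne')
  linear_combination k * U φ₀ * (hrad2 + hang) - ((k - 1) * k * U φ₀ + deriv (deriv U) φ₀) * hrad1

/-- For `V(r cos φ, r sin φ) = r^k U(φ)` (`k ≠ 0`), if
`c⃗ = (c cos φ₀, c sin φ₀)` with `c > 0` is a Darboux point of `V` (`∇V(c⃗) = c⃗`),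
`U'(φ₀) = 0` and `U(φ₀) ≠ 0`, then the eigenvalue
`λ = ΔV(c⃗) - (k-1)` of the Hessian satisfies `λ = 1 + U''(φ₀)/(k U(φ₀))`. -/
theorem darboux_point_lambda
    (k : ℝ) (hk : k ≠ 0) (U : ℝ → ℝ) (hU : ContDiff ℝ 2 U)
    (V : ℝ × ℝ → ℝ) (hV : ContDiffOn ℝ 2 V {q : ℝ × ℝ | q ≠ 0})
    (hpolar : ∀ r : ℝ, 0 < r → ∀ φ : ℝ,
      V (r * Real.cos φ, r * Real.sin φ) = r ^ k * U φ)
    (c φ₀ : ℝ) (hc : 0 < c)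
    (hdarboux1 : d1 V (c * Real.cos φ₀, c * Real.sin φ₀) = c * Real.cos φ₀)
    (hdarboux2 : d2 V (c * Real.cos φ₀, c * Real.sin φ₀) = c * Real.sin φ₀)
    (hcrit : deriv U φ₀ = 0) (hU0 : U φ₀ ≠ 0) :
    d11 V (c * Real.cos φ₀, c * Real.sin φ₀)
      + d22 V (c * Real.cos φ₀, c * Real.sin φ₀) - (k - 1)
      = 1 + deriv (deriv U) φ₀ / (k * U φ₀) :=
  darboux_point_lambda_general k hk U V hV hpolar c φ₀ hc hdarboux1 hdarboux2 hU0
end
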